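/- Let χ : ℤ≥1 → ℂ be a multiplicative function (χ(1) = 1 and χ(mn) = χ(m)χ(n) whenever gcd(m,n) = 1), let l be a positive integer, and let w ∈ ℂ be such that p^{1−2w} ≠ 1 for every prime p dividing l. Define τ_s(k) := Σ_{ab=k} (a/b)^s (sum over ordered factorizations k = ab into positive integers) and T_l(w) := Σ_{l₁ l₂ = l} χ(l₁) · μ(l₁) · l₁^{−1/2} · τ_{w−1/2}(l₂). Then l^{1/2−w} · T_l(w) = ∏_{p | l, p prime} [ (1 − p^{(1−2w)(1+ν_p(l))})/(1 − p^{1−2w}) − χ(p) · p^{−w} · (1 − p^{(1−2w)·ν_p(l)})/(1 − p^{1−2w}) ], where ν_p(l) is the exponent of p in the prime factorization of l. -/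

import Mathlib

open Finset ArithmeticFunction

/-- `τ_s(k) = Σ_{ab = k} (a/b)^s`, summed over ordered factorizations `k = a·b`. -/
noncomputable def tauC (s : ℂ) (k : ℕ) : ℂ :=
  ∑ a ∈ k.divisors, (((a : ℝ) / ((k / a : ℕ) : ℝ) : ℝ) : ℂ) ^ s

/-- `T_l(w) = Σ_{l₁l₂ = l} χ(l₁) μ(l₁) l₁^{-1/2} τ_{w-1/2}(l₂)`. -/
noncomputable def Tfun (χ : ℕ → ℂ) (l : ℕ) (w : ℂ) : ℂ :=
  ∑ d ∈ l.divisors, χ d * (moebius d : ℂ) * (d : ℂ) ^ (-(1 / 2 : ℂ)) *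
    tauC (w - 1 / 2) (l / d)


/-!
Writing `k = ab` and `(a/b)^s = a^s b^{-s}` gives `k^{-s} τ_s(k) = Σ_{b ∣ k} b^{-2s}`, so
`l^{1/2-w} T_l(w)` is the value at `l` of the Dirichlet convolution of the multiplicative functions
`n ↦ χ(n) μ(n) n^{-w}` and `n ↦ Σ_{b ∣ n} b^{1-2w}`. At a prime power `p^e` only the divisors `1`
and `p` survive the Möbius factor, and what remains are two geometric series in `p^{1-2w} ≠ 1`.
-/

open scoped ArithmeticFunction.zeta

namespace ArithmeticFunction

-- The `if` matters: `(0 : ℂ) ^ 0 = 1`.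
noncomputable def cpow (s : ℂ) : ArithmeticFunction ℂ :=
  ⟨fun n => if n = 0 then 0 else (n : ℂ) ^ s, rfl⟩

lemma cpow_apply_of_ne_zero {s : ℂ} {n : ℕ} (hn : n ≠ 0) : cpow s n = (n : ℂ) ^ s :=
  if_neg hn

lemma isMultiplicative_cpow (s : ℂ) : (cpow s).IsMultiplicative := by
  refine IsMultiplicative.iff_ne_zero.mpr ⟨by simp [cpow_apply_of_ne_zero], fun {m n} hm hn _ => ?_⟩
  rw [cpow_apply_of_ne_zero (mul_ne_zero hm hn), cpow_apply_of_ne_zero hm,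
    cpow_apply_of_ne_zero hn, Nat.cast_mul, Complex.natCast_mul_natCast_cpow]

lemma zeta_mul_cpow_apply_prime_pow {p : ℕ} (hp : p.Prime) (s : ℂ) (m : ℕ) :
    ((ζ : ArithmeticFunction ℂ) * cpow s) (p ^ m) = ∑ i ∈ range (m + 1), ((p : ℂ) ^ s) ^ i := by
  rw [coe_zeta_mul_apply, Nat.sum_divisors_prime_pow hp]
  refine sum_congr rfl fun i _ => ?_
  rw [cpow_apply_of_ne_zero (pow_ne_zero _ hp.ne_zero), Nat.cast_pow,
    ← Complex.natCast_cpow_natCast_mul, Complex.cpow_nat_mul]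

noncomputable def twistedMoebius (χ : ℕ → ℂ) (w : ℂ) : ArithmeticFunction ℂ :=
  ⟨fun n => χ n * moebius n * (n : ℂ) ^ (-w), by simp⟩

lemma twistedMoebius_apply (χ : ℕ → ℂ) (w : ℂ) (n : ℕ) :
    twistedMoebius χ w n = χ n * moebius n * (n : ℂ) ^ (-w) :=
  rfl

lemma isMultiplicative_twistedMoebius {χ : ℕ → ℂ} (hχ1 : χ 1 = 1)
    (hχ : ∀ m n : ℕ, Nat.Coprime m n → χ (m * n) = χ m * χ n) (w : ℂ) :
    (twistedMoebius χ w).IsMultiplicative := by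
  refine ⟨by simp [twistedMoebius_apply, hχ1], fun {m n} hmn => ?_⟩
  simp only [twistedMoebius_apply]
  rw [hχ m n hmn, isMultiplicative_moebius.map_mul_of_coprime hmn, Nat.cast_mul,
    Complex.natCast_mul_natCast_cpow]
  push_cast
  ring

lemma twistedMoebius_mul_apply_prime_pow_succ {χ : ℕ → ℂ} (hχ1 : χ 1 = 1) (w : ℂ)
    (f : ArithmeticFunction ℂ) {p : ℕ} (hp : p.Prime) (e : ℕ) :
    (twistedMoebius χ w * f) (p ^ (e + 1)) =
      f (p ^ (e + 1)) - χ p * (p : ℂ) ^ (-w) * f (p ^ e) := by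
  rw [mul_apply, Nat.sum_divisorsAntidiagonal (fun x y => twistedMoebius χ w x * f y),
    Nat.sum_divisors_prime_pow hp, sum_range_succ', sum_range_succ']
  have hsquarefull : ∀ i, moebius (p ^ (i + 1 + 1)) = 0 := fun i => by
    rw [moebius_apply_prime_pow hp (by omega), if_neg (by omega)]
  have hdiv : p ^ (e + 1) / p = p ^ e := by rw [pow_succ, Nat.mul_div_cancel _ hp.pos]
  simp only [twistedMoebius_apply, hsquarefull, Int.cast_zero, mul_zero, zero_mul, sum_const_zero,
    zero_add, pow_zero, pow_one, Nat.div_one, hdiv, moebius_apply_prime hp, hχ1, Int.cast_one,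
    Int.cast_neg, Nat.cast_one, Complex.one_cpow, moebius_apply_one]
  ring

end ArithmeticFunction

lemma natCast_mul_cpow_neg_mul_div_cpow {a b : ℕ} (ha : a ≠ 0) (hb : b ≠ 0) (s : ℂ) :
    ((a * b : ℕ) : ℂ) ^ (-s) * (((a : ℝ) / (b : ℝ) : ℝ) : ℂ) ^ s = (b : ℂ) ^ (-2 * s) := by
  have ha' : (a : ℂ) ≠ 0 := Nat.cast_ne_zero.mpr ha
  have hb' : (b : ℂ) ≠ 0 := Nat.cast_ne_zero.mpr hb
  rw [Complex.ofReal_div, Complex.div_cpow_ofReal_nonneg (Nat.cast_nonneg a) (Nat.cast_nonneg b),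
    Complex.ofReal_natCast, Complex.ofReal_natCast, Nat.cast_mul,
    Complex.natCast_mul_natCast_cpow, show -2 * s = -s + -s by ring, Complex.cpow_add _ _ hb',
    Complex.cpow_neg, Complex.cpow_neg]
  have has : (a : ℂ) ^ s ≠ 0 := Complex.cpow_ne_zero_iff.mpr (Or.inl ha')
  field_simp

lemma natCast_cpow_neg_mul_tauC (s : ℂ) {k : ℕ} (hk : k ≠ 0) :
    (k : ℂ) ^ (-s) * tauC s k = ((ζ : ArithmeticFunction ℂ) * cpow (-2 * s)) k := by
  rw [coe_zeta_mul_apply, ← Nat.sum_div_divisors, tauC, mul_sum]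
  refine sum_congr rfl fun a ha => ?_
  obtain ⟨b, rfl⟩ := Nat.dvd_of_mem_divisors ha
  have ha0 : a ≠ 0 := left_ne_zero_of_mul hk
  have hb0 : b ≠ 0 := right_ne_zero_of_mul hk
  rw [Nat.mul_div_cancel_left b (Nat.pos_of_ne_zero ha0), cpow_apply_of_ne_zero hb0,
    natCast_mul_cpow_neg_mul_div_cpow ha0 hb0]

lemma natCast_cpow_mul_Tfun (χ : ℕ → ℂ) (w : ℂ) {l : ℕ} (hl : l ≠ 0) :
    (l : ℂ) ^ ((1 / 2 : ℂ) - w) * Tfun χ l w =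
      (twistedMoebius χ w * ((ζ : ArithmeticFunction ℂ) * cpow (1 - 2 * w))) l := by
  rw [mul_apply, Nat.sum_divisorsAntidiagonal (fun x y => twistedMoebius χ w x *
    ((ζ : ArithmeticFunction ℂ) * cpow (1 - 2 * w)) y), Tfun, mul_sum]
  refine sum_congr rfl fun d hd => ?_
  obtain ⟨m, rfl⟩ := Nat.dvd_of_mem_divisors hd
  have hd0 : d ≠ 0 := left_ne_zero_of_mul hl
  have hm0 : m ≠ 0 := right_ne_zero_of_mul hl
  have hd_cpow : (d : ℂ) ^ ((1 / 2 : ℂ) - w) * (d : ℂ) ^ (-(1 / 2 : ℂ)) = (d : ℂ) ^ (-w) := by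
    rw [← Complex.cpow_add _ _ (Nat.cast_ne_zero.mpr hd0)]
    ring_nf
  rw [Nat.mul_div_cancel_left m (Nat.pos_of_ne_zero hd0), show 1 - 2 * w = -2 * (w - 1 / 2) by ring,
    ← natCast_cpow_neg_mul_tauC _ hm0, twistedMoebius_apply, neg_sub, Nat.cast_mul,
    Complex.natCast_mul_natCast_cpow]
  linear_combination χ d * moebius d * (m : ℂ) ^ ((1 / 2 : ℂ) - w) * tauC (w - 1 / 2) m * hd_cpow

lemma twistedMoebius_mul_zeta_mul_cpow_apply_prime_pow {χ : ℕ → ℂ} (hχ1 : χ 1 = 1) (w : ℂ)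
    {p : ℕ} (hp : p.Prime) (hx : (p : ℂ) ^ ((1 : ℂ) - 2 * w) ≠ 1) {e : ℕ} (he : e ≠ 0) :
    (twistedMoebius χ w * ((ζ : ArithmeticFunction ℂ) * cpow (1 - 2 * w))) (p ^ e) =
      (1 - (p : ℂ) ^ (((1 : ℂ) - 2 * w) * (1 + (e : ℂ)))) / (1 - (p : ℂ) ^ ((1 : ℂ) - 2 * w)) -
        χ p * (p : ℂ) ^ (-w) * (1 - (p : ℂ) ^ (((1 : ℂ) - 2 * w) * (e : ℂ))) /
          (1 - (p : ℂ) ^ ((1 : ℂ) - 2 * w)) := by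
  obtain ⟨k, rfl⟩ := Nat.exists_eq_add_one_of_ne_zero he
  rw [twistedMoebius_mul_apply_prime_pow_succ hχ1 w _ hp, zeta_mul_cpow_apply_prime_pow hp,
    zeta_mul_cpow_apply_prime_pow hp, geom_sum_eq hx, geom_sum_eq hx,
    show (1 : ℂ) + ((k + 1 : ℕ) : ℂ) = ((k + 1 + 1 : ℕ) : ℂ) by push_cast; ring,
    Complex.cpow_mul_nat, Complex.cpow_mul_nat]
  generalize (p : ℂ) ^ ((1 : ℂ) - 2 * w) = x at hx ⊢
  have hx' : 1 - x ≠ 0 := sub_ne_zero.mpr (Ne.symm hx)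
  field_simp
  ring

/-- Euler product expression for `l^{1/2-w} T_l(w)`. -/
theorem stmt_6 (χ : ℕ → ℂ) (hχ1 : χ 1 = 1)
    (hχ : ∀ m n : ℕ, Nat.Coprime m n → χ (m * n) = χ m * χ n)
    (l : ℕ) (hl : 0 < l) (w : ℂ)
    (hw : ∀ p : ℕ, p.Prime → p ∣ l → (p : ℂ) ^ ((1 : ℂ) - 2 * w) ≠ 1) :
    (l : ℂ) ^ ((1 / 2 : ℂ) - w) * Tfun χ l w =
      ∏ p ∈ l.primeFactors,
        ((1 - (p : ℂ) ^ (((1 : ℂ) - 2 * w) * (1 + (l.factorization p : ℂ)))) /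
            (1 - (p : ℂ) ^ ((1 : ℂ) - 2 * w)) -
          χ p * (p : ℂ) ^ (-w) *
            (1 - (p : ℂ) ^ (((1 : ℂ) - 2 * w) * (l.factorization p : ℂ))) /
            (1 - (p : ℂ) ^ ((1 : ℂ) - 2 * w))) := by
  have hmul := (isMultiplicative_twistedMoebius hχ1 hχ w).mul
    (isMultiplicative_zeta.natCast.mul (isMultiplicative_cpow (1 - 2 * w)))
  rw [natCast_cpow_mul_Tfun χ w hl.ne', hmul.multiplicative_factorization _ hl.ne',
    Nat.prod_factorization_eq_prod_primeFactors]
  refine prod_congr rfl fun p hp => ?_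
  have hp' : p.Prime := Nat.prime_of_mem_primeFactors hp
  have hpl : p ∣ l := Nat.dvd_of_mem_primeFactors hp
  exact twistedMoebius_mul_zeta_mul_cpow_apply_prime_pow hχ1 w hp' (hw p hp' hpl)
    (hp'.factorization_pos_of_dvd hl.ne' hpl).ne'
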